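/- arXiv:2510.19740 — 3 statements merged into one kernel-verified Lean document; each statement's English description precedes it below -/
import Mathlib

section
/- For all integers m ≥ 1 and n ≥ 1, the shifted Ramanujan sum satisfies c_m(n+1) = (μ(m)/φ(m))·c_m(n) + (1/φ(m))·Σ_{χ mod m, χ ≠ χ₀} τ(χ)·c'_{χ̄}(n), where the sum is over non-principal Dirichlet characters mod m. -/
open scoped Classical
open ArithmeticFunction

noncomputable def eC (x : ℂ) : ℂ := Complex.exp (2 * Real.pi * Complex.I * x)

/-- Ramanujan sum `c_m(n) = ∑_{b mod m, (b,m)=1} e(bn/m)`. -/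
noncomputable def ramanujanSum (m n : ℕ) : ℂ :=
  ∑ b ∈ (Finset.range m).filter (fun b => Nat.Coprime b m), eC ((b : ℂ) * n / m)

/-- Gauss sum `τ(χ) = ∑_{b mod m} χ(b) e(b/m)`. -/
noncomputable def gaussSum' {m : ℕ} (χ : DirichletCharacter ℂ m) : ℂ :=
  ∑ b ∈ Finset.range m, χ b * eC ((b : ℂ) / m)

/-- `c'_g(n) = ∑_{b mod m, (b,m)=1} g(b) e(bn/m)` for a weight `g`. -/
noncomputable def cCharF (m : ℕ) (g : ℕ → ℂ) (n : ℕ) : ℂ :=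
  ∑ b ∈ (Finset.range m).filter (fun b => Nat.Coprime b m), g b * eC ((b : ℂ) * n / m)

/-!
Expand `τ(χ) c'_χ̄(n)` as a double sum over reduced residues `a, b` and sum over all `χ`:
orthogonality of characters keeps only `a = b`, so `∑_χ τ(χ) c'_χ̄(n) = φ(m) c_m(n + 1)`.
The principal character contributes `τ(χ₀) c_m(n) = c_m(1) c_m(n)`, and `c_m(1) = μ(m)` by Möbius
inversion of `∑_{d ∣ m} c_d(1) = ∑_{b mod m} e(b/m) = [m = 1]`, obtained by grouping `b` by
`gcd(m, b)`.
-/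

open Finset

lemma eC_add (x y : ℂ) : eC (x + y) = eC x * eC y := by
  simp only [eC, mul_add, Complex.exp_add]

lemma sum_range_eC_div (n : ℕ) :
    ∑ b ∈ range n, eC ((b : ℂ) / n) = if n = 1 then 1 else 0 := by
  rcases lt_trichotomy n 1 with hn | rfl | hn
  · simp [Nat.lt_one_iff.mp hn]
  · simp [eC]
  have hζ : IsPrimitiveRoot (eC (1 / n)) n := by
    simpa [eC, div_eq_mul_inv] using Complex.isPrimitiveRoot_exp n (by omega)
  have hpow (b : ℕ) : eC ((b : ℂ) / n) = eC (1 / n) ^ b := by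
    rw [eC, eC, ← Complex.exp_nat_mul]
    ring_nf
  rw [if_neg hn.ne', sum_congr rfl fun b _ => hpow b]
  exact hζ.geom_sum_eq_zero hn

lemma ramanujanSum_one_eq_sum (k : ℕ) :
    ramanujanSum k 1 = ∑ b ∈ (range k).filter (Nat.Coprime · k), eC ((b : ℂ) / k) := by
  simp only [ramanujanSum, Nat.cast_one, mul_one]

lemma filter_gcd_eq_image_mul {d k : ℕ} (hd : 0 < d) :
    (range (d * k)).filter (fun b => (d * k).gcd b = d) =
      ((range k).filter (Nat.Coprime · k)).image (· * d) := by
  ext b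
  simp only [mem_filter, mem_range, mem_image]
  constructor
  · rintro ⟨hb, hgcd⟩
    obtain ⟨c, rfl⟩ : d ∣ b := hgcd ▸ Nat.gcd_dvd_right _ _
    rw [Nat.gcd_mul_left, Nat.mul_eq_left hd.ne'] at hgcd
    exact ⟨c, ⟨by nlinarith, Nat.coprime_comm.mp hgcd⟩, mul_comm c d⟩
  · rintro ⟨c, ⟨hc, hcop⟩, rfl⟩
    refine ⟨by nlinarith, ?_⟩
    rw [mul_comm c d, Nat.gcd_mul_left, Nat.coprime_comm.mp hcop, mul_one]

lemma sum_filter_gcd_eC_div {d k : ℕ} (hd : 0 < d) :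
    ∑ b ∈ (range (d * k)).filter (fun b => (d * k).gcd b = d), eC ((b : ℂ) / (d * k : ℕ)) =
      ramanujanSum k 1 := by
  rw [filter_gcd_eq_image_mul hd, sum_image fun _ _ _ _ h => Nat.eq_of_mul_eq_mul_right hd h,
    ramanujanSum_one_eq_sum]
  refine sum_congr rfl fun c _ => congrArg eC ?_
  have : (d : ℂ) ≠ 0 := by exact_mod_cast hd.ne'
  push_cast
  rw [mul_comm (d : ℂ), mul_div_mul_right _ _ this]

lemma sum_divisors_ramanujanSum_one {n : ℕ} (hn : 0 < n) :
    ∑ d ∈ n.divisors, ramanujanSum d 1 = if n = 1 then 1 else 0 := by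
  rw [← sum_range_eC_div, ← Nat.sum_div_divisors,
    ← sum_fiberwise_of_maps_to (s := range n) (g := n.gcd) (f := fun b => eC ((b : ℂ) / n))
      fun b _ => Nat.mem_divisors.mpr ⟨Nat.gcd_dvd_left n b, hn.ne'⟩]
  refine sum_congr rfl fun d hd => ?_
  obtain ⟨⟨k, hk⟩, -⟩ := Nat.mem_divisors.mp hd
  have hd0 : 0 < d := Nat.pos_of_dvd_of_pos ⟨k, hk⟩ hn
  subst hk
  rw [Nat.mul_div_cancel_left k hd0, ← sum_filter_gcd_eC_div hd0]

theorem ramanujanSum_one (m : ℕ) : ramanujanSum m 1 = ((moebius m : ℤ) : ℂ) := by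
  rcases m.eq_zero_or_pos with rfl | hm
  · simp [ramanujanSum]
  rw [← (sum_eq_iff_sum_mul_moebius_eq.mp fun _ => sum_divisors_ramanujanSum_one) m hm,
    Nat.sum_divisorsAntidiagonal' (fun a b => ((moebius a : ℤ) : ℂ) * if b = 1 then 1 else 0)]
  simp [hm.ne']

section Characters

variable {m : ℕ}

lemma isUnit_of_mem_filter_coprime {b : ℕ} (hb : b ∈ (range m).filter (Nat.Coprime · m)) :
    IsUnit (b : ZMod m) :=
  (ZMod.isUnit_iff_coprime b m).mpr (mem_filter.mp hb).2

lemma conj_apply_eq_apply_inv (χ : DirichletCharacter ℂ m) {b : ZMod m} (hb : IsUnit b) :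
    starRingEnd ℂ (χ b) = χ b⁻¹ := by
  obtain ⟨u, rfl⟩ := hb
  rw [← Complex.star_def, MulChar.star_apply', MulChar.inv_apply, Ring.inverse_unit,
    ZMod.inv_coe_unit]

lemma sum_char_mul_conj_char_eq [NeZero m] {a b : ℕ} (ha : a ∈ (range m).filter (Nat.Coprime · m))
    (hb : b ∈ (range m).filter (Nat.Coprime · m)) :
    ∑ χ : DirichletCharacter ℂ m, χ a * starRingEnd ℂ (χ b) =
      if a = b then (m.totient : ℂ) else 0 := by
  have hcast : (b : ZMod m) = a ↔ a = b := by
    rw [ZMod.natCast_eq_natCast_iff', Nat.mod_eq_of_lt (mem_range.mp (mem_filter.mp ha).1),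
      Nat.mod_eq_of_lt (mem_range.mp (mem_filter.mp hb).1), eq_comm]
  rw [← if_congr hcast rfl rfl,
    ← DirichletCharacter.sum_char_inv_mul_char_eq ℂ (isUnit_of_mem_filter_coprime hb)]
  refine sum_congr rfl fun χ _ => ?_
  rw [conj_apply_eq_apply_inv χ (isUnit_of_mem_filter_coprime hb), mul_comm]

lemma gaussSum'_eq_sum_filter_coprime (χ : DirichletCharacter ℂ m) :
    gaussSum' χ = ∑ b ∈ (range m).filter (Nat.Coprime · m), χ b * eC ((b : ℂ) / m) := by
  refine (sum_filter_of_ne fun b _ hne => ?_).symm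
  by_contra hcop
  exact hne (by rw [MulChar.map_nonunit χ (by simpa [ZMod.isUnit_iff_coprime] using hcop), zero_mul])

end Characters

lemma sum_gaussSum'_mul_cCharF_conj (m : ℕ) [NeZero m] (n : ℕ) :
    ∑ χ : DirichletCharacter ℂ m, gaussSum' χ * cCharF m (fun b => starRingEnd ℂ (χ b)) n =
      m.totient * ramanujanSum m (n + 1) := by
  set U := (range m).filter (Nat.Coprime · m)
  simp only [gaussSum'_eq_sum_filter_coprime, cCharF, sum_mul_sum]
  calc _ = ∑ a ∈ U, ∑ b ∈ U, (∑ χ : DirichletCharacter ℂ m, χ a * starRingEnd ℂ (χ b)) *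
          (eC ((a : ℂ) / m) * eC ((b : ℂ) * n / m)) := by
        rw [sum_comm]
        refine sum_congr rfl fun a _ => ?_
        rw [sum_comm]
        refine sum_congr rfl fun b _ => ?_
        rw [sum_mul]
        exact sum_congr rfl fun χ _ => by ring
    _ = ∑ a ∈ U, m.totient * (eC ((a : ℂ) / m) * eC ((a : ℂ) * n / m)) := by
        refine sum_congr rfl fun a ha => ?_
        rw [sum_congr rfl fun b hb => congrArg (· * _) (sum_char_mul_conj_char_eq ha hb)]
        simp only [ite_mul, zero_mul, sum_ite_eq]
        exact if_pos ha
    _ = m.totient * ramanujanSum m (n + 1) := by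
        rw [ramanujanSum, mul_sum]
        refine sum_congr rfl fun a _ => ?_
        rw [← eC_add]
        push_cast
        congr 2
        ring

lemma gaussSum'_one (m : ℕ) [NeZero m] :
    gaussSum' (1 : DirichletCharacter ℂ m) = ((moebius m : ℤ) : ℂ) := by
  rw [gaussSum'_eq_sum_filter_coprime, ← ramanujanSum_one, ramanujanSum_one_eq_sum]
  refine sum_congr rfl fun b hb => ?_
  rw [MulChar.one_apply (isUnit_of_mem_filter_coprime hb), one_mul]

lemma cCharF_conj_one (m n : ℕ) :
    cCharF m (fun b => starRingEnd ℂ ((1 : DirichletCharacter ℂ m) b)) n = ramanujanSum m n := by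
  refine sum_congr rfl fun b hb => ?_
  dsimp only
  rw [MulChar.one_apply (isUnit_of_mem_filter_coprime hb), map_one, one_mul]

theorem stmt0_general (m : ℕ) [NeZero m] (n : ℕ) :
    ramanujanSum m (n + 1) =
      ((moebius m : ℤ) / (Nat.totient m : ℂ)) * ramanujanSum m n +
      (1 / (Nat.totient m : ℂ)) *
        ∑ χ ∈ Finset.univ.filter (fun χ : DirichletCharacter ℂ m => χ ≠ 1),
          gaussSum' χ * cCharF m (fun b => starRingEnd ℂ (χ b)) n := by
  have htot : (m.totient : ℂ) ≠ 0 := by exact_mod_cast (Nat.totient_pos.mpr (NeZero.pos m)).ne'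
  have hsplit := sum_gaussSum'_mul_cCharF_conj m n
  rw [← add_sum_erase _ _ (mem_univ 1), gaussSum'_one, cCharF_conj_one] at hsplit
  rw [filter_ne' univ 1, div_mul_eq_mul_div, one_div_mul_eq_div, ← add_div, eq_div_iff htot, hsplit, mul_comm]

theorem stmt0 (m : ℕ) [NeZero m] (n : ℕ) (hn : 1 ≤ n) :
    ramanujanSum m (n + 1) =
      ((moebius m : ℤ) / (Nat.totient m : ℂ)) * ramanujanSum m n +
      (1 / (Nat.totient m : ℂ)) *
        ∑ χ ∈ Finset.univ.filter (fun χ : DirichletCharacter ℂ m => χ ≠ 1),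
          gaussSum' χ * cCharF m (fun b => starRingEnd ℂ (χ b)) n :=
  stmt0_general m n
end

section
/- For every fixed integer r ≥ 1 and positive integer n, the identity σ_r(n) = ζ(r+1)·n^r·Σ_{m=1}^{∞} c_m(n)/m^{r+1} holds, where the series converges absolutely. -/
/-! Writing `[(b, m) = 1] = ∑_{d ∣ (b, m)} μ(d)` and summing the resulting complete exponential
sums gives Kluyver's formula `c_m(n) = ∑_{dq = m, q ∣ n} μ(d) q`, i.e. `m ↦ c_m(n)` is the
Dirichlet convolution of `μ` with `q ↦ q [q ∣ n]`. Taking L-series,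
`∑ c_m(n) m^{-s} = ζ(s)⁻¹ ∑_{q ∣ n} q^{1-s}` for `Re s > 1`, and at `s = r + 1` the divisor sum is
`n^{-r} σ_r(n)`. -/

open scoped Classical
open ArithmeticFunction

open scoped LSeries.notation ArithmeticFunction.Moebius

lemma eC_natCast_mul_div (b n q : ℕ) :
    eC ((b : ℂ) * n / q) = Complex.exp (2 * Real.pi * Complex.I / q) ^ (n * b) := by
  rw [eC, ← Complex.exp_nat_mul]
  push_cast
  ring_nf

lemma sum_range_eC_mul_div {q : ℕ} (hq : q ≠ 0) (n : ℕ) :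
    ∑ b ∈ Finset.range q, eC ((b : ℂ) * n / q) = if q ∣ n then (q : ℂ) else 0 := by
  set ζ := Complex.exp (2 * Real.pi * Complex.I / q) with hζdef
  have hζ : IsPrimitiveRoot ζ q := Complex.isPrimitiveRoot_exp q hq
  simp_rw [eC_natCast_mul_div, ← hζdef, pow_mul]
  split_ifs with hdvd
  · simp [(hζ.pow_eq_one_iff_dvd n).mpr hdvd]
  · have hζn : (ζ ^ n) ^ q = 1 := by rw [← pow_mul, mul_comm, pow_mul, hζ.pow_eq_one, one_pow]
    rw [geom_sum_eq (mt (hζ.pow_eq_one_iff_dvd n).mp hdvd), hζn, sub_self, zero_div]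

lemma sum_divisors_moebius {R : Type*} [Ring R] (k : ℕ) :
    ∑ d ∈ k.divisors, (μ d : R) = if k = 1 then 1 else 0 := by
  simpa only [coe_mul_zeta_apply, one_apply, intCoe_apply] using
    congr($(coe_moebius_mul_coe_zeta (R := R)) k)

lemma sum_divisors_filter_dvd_moebius {R : Type*} [Ring R] {m : ℕ} (hm : m ≠ 0) (b : ℕ) :
    ∑ d ∈ m.divisors with d ∣ b, (μ d : R) = if b.Coprime m then 1 else 0 := by
  have hgcd : b.gcd m ≠ 0 := (Nat.gcd_pos_of_pos_right b (Nat.pos_of_ne_zero hm)).ne'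
  have hdiv : {d ∈ m.divisors | d ∣ b} = (b.gcd m).divisors := by
    ext d
    simp only [Finset.mem_filter, Nat.mem_divisors, Nat.dvd_gcd_iff]
    tauto
  rw [hdiv, sum_divisors_moebius]

lemma sum_range_mul_filter_dvd {M : Type*} [AddCommMonoid M] {d : ℕ} (hd : d ≠ 0) (q : ℕ)
    (f : ℕ → M) :
    ∑ b ∈ Finset.range (d * q) with d ∣ b, f b = ∑ c ∈ Finset.range q, f (d * c) := by
  have himage : {b ∈ Finset.range (d * q) | d ∣ b} = (Finset.range q).image (d * ·) := by
    ext b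
    simp only [Finset.mem_filter, Finset.mem_range, Finset.mem_image]
    constructor
    · rintro ⟨hb, c, rfl⟩
      exact ⟨c, lt_of_mul_lt_mul_left hb (Nat.zero_le d), rfl⟩
    · rintro ⟨c, hc, rfl⟩
      exact ⟨Nat.mul_lt_mul_of_pos_left hc (Nat.pos_of_ne_zero hd), dvd_mul_right d c⟩
  rw [himage, Finset.sum_image fun _ _ _ _ h => Nat.eq_of_mul_eq_mul_left
    (Nat.pos_of_ne_zero hd) h]

lemma ramanujanSum_eq_sum_divisorsAntidiagonal (m n : ℕ) :
    ramanujanSum m n = ∑ x ∈ m.divisorsAntidiagonal,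
      (μ x.1 : ℂ) * if x.2 ∣ n then (x.2 : ℂ) else 0 := by
  rcases eq_or_ne m 0 with rfl | hm
  · simp [ramanujanSum]
  have hcoprime : ∀ b, (if b.Coprime m then eC ((b : ℂ) * n / m) else 0) =
      ∑ d ∈ m.divisors, if d ∣ b then (μ d : ℂ) * eC ((b : ℂ) * n / m) else 0 := by
    intro b
    rw [← Finset.sum_filter, ← Finset.sum_mul, sum_divisors_filter_dvd_moebius hm, ite_mul,
      one_mul, zero_mul]
  rw [ramanujanSum, Finset.sum_filter, Finset.sum_congr rfl fun b _ => hcoprime b,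
    Finset.sum_comm, ← Nat.sum_divisorsAntidiagonal
      (f := fun d _ => ∑ b ∈ Finset.range m, if d ∣ b then (μ d : ℂ) * eC (b * n / m) else 0)]
  refine Finset.sum_congr rfl fun x hx => ?_
  obtain ⟨rfl, -⟩ := Nat.mem_divisorsAntidiagonal.mp hx
  have hd : x.1 ≠ 0 := left_ne_zero_of_mul hm
  have hq : x.2 ≠ 0 := right_ne_zero_of_mul hm
  rw [← Finset.sum_filter, sum_range_mul_filter_dvd hd, ← Finset.mul_sum,
    ← sum_range_eC_mul_div hq]
  congr 2 with c
  congr 1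
  push_cast
  field_simp

lemma ramanujanSum_eq_moebius_convolution (n : ℕ) :
    (ramanujanSum · n) = ↗μ ⍟ fun q => if q ∣ n then (q : ℂ) else 0 := by
  ext m
  rw [ramanujanSum_eq_sum_divisorsAntidiagonal, LSeries.convolution_def]

lemma LSeriesHasSum_moebius {s : ℂ} (hs : 1 < s.re) :
    LSeriesHasSum ↗μ s (riemannZeta s)⁻¹ := by
  convert (LSeriesSummable_moebius_iff.mpr hs).LSeriesHasSum
  rw [← LSeries_zeta_eq_riemannZeta hs]
  exact (eq_inv_of_mul_eq_one_right (LSeries_zeta_mul_Lseries_moebius hs)).symm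

lemma LSeriesHasSum_ite_dvd {n : ℕ} (hn : n ≠ 0) (s : ℂ) :
    LSeriesHasSum (fun q => if q ∣ n then (q : ℂ) else 0) s
      (∑ q ∈ n.divisors, (q : ℂ) / (q : ℂ) ^ s) := by
  have hsupp : ∀ q ∉ n.divisors,
      LSeries.term (fun q => if q ∣ n then (q : ℂ) else 0) s q = 0 := by
    intro q hq
    have hqn : ¬ q ∣ n := fun h => hq (Nat.mem_divisors.mpr ⟨h, hn⟩)
    simp [LSeries.term_def, hqn]
  have hterm : ∀ q ∈ n.divisors,
      LSeries.term (fun q => if q ∣ n then (q : ℂ) else 0) s q = (q : ℂ) / (q : ℂ) ^ s := by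
    intro q hq
    rw [LSeries.term_of_ne_zero (Nat.ne_of_gt (Nat.pos_of_mem_divisors hq)),
      if_pos (Nat.dvd_of_mem_divisors hq)]
  rw [← Finset.sum_congr rfl hterm]
  exact hasSum_sum_of_ne_finset_zero hsupp

theorem LSeriesHasSum_ramanujanSum {n : ℕ} (hn : n ≠ 0) {s : ℂ} (hs : 1 < s.re) :
    LSeriesHasSum (ramanujanSum · n) s
      ((riemannZeta s)⁻¹ * ∑ q ∈ n.divisors, (q : ℂ) / (q : ℂ) ^ s) := by
  rw [ramanujanSum_eq_moebius_convolution]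
  exact (LSeriesHasSum_moebius hs).convolution (LSeriesHasSum_ite_dvd hn s)

lemma LSeriesHasSum_natCast_iff_hasSum_succ {f : ℕ → ℂ} {k : ℕ} {a : ℂ} :
    LSeriesHasSum f k a ↔ HasSum (fun m : ℕ => f (m + 1) / ((m + 1 : ℕ) : ℂ) ^ k) a := by
  rw [LSeriesHasSum, ← hasSum_nat_add_iff' 1]
  simp [LSeries.term_of_ne_zero]

lemma natCast_pow_mul_sum_divisors_div_pow {n : ℕ} (hn : n ≠ 0) (r : ℕ) :
    (n : ℂ) ^ r * ∑ q ∈ n.divisors, (q : ℂ) / (q : ℂ) ^ (r + 1) = sigma r n := by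
  have hterm : ∀ q ∈ n.divisors,
      (n : ℂ) ^ r * ((q : ℂ) / (q : ℂ) ^ (r + 1)) = ((n / q : ℕ) : ℂ) ^ r := by
    intro q hq
    have hq0 : (q : ℂ) ≠ 0 := Nat.cast_ne_zero.mpr (Nat.ne_of_gt (Nat.pos_of_mem_divisors hq))
    rw [Nat.cast_div (Nat.dvd_of_mem_divisors hq) hq0, div_pow, pow_succ]
    field_simp
  rw [Finset.mul_sum, Finset.sum_congr rfl hterm, sigma_apply]
  exact_mod_cast Nat.sum_div_divisors n (· ^ r)

theorem stmt9 (r n : ℕ) (hr : 1 ≤ r) (hn : 1 ≤ n) :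
    Summable (fun m : ℕ =>
      ‖ramanujanSum (m + 1) n / ((m + 1 : ℕ) : ℂ) ^ (r + 1)‖) ∧
    (sigma r n : ℂ) =
      riemannZeta ((r : ℂ) + 1) * (n : ℂ) ^ r *
        ∑' m : ℕ, ramanujanSum (m + 1) n / ((m + 1 : ℕ) : ℂ) ^ (r + 1) := by
  have hn0 : n ≠ 0 := Nat.one_le_iff_ne_zero.mp hn
  have hs : (r : ℂ) + 1 = ((r + 1 : ℕ) : ℂ) := by push_cast; rfl
  have hre : 1 < (((r + 1 : ℕ) : ℂ)).re := by
    rw [Complex.natCast_re]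
    exact_mod_cast Nat.lt_succ_of_le hr
  have hsum := LSeriesHasSum_natCast_iff_hasSum_succ.mp (LSeriesHasSum_ramanujanSum hn0 hre)
  simp only [Complex.cpow_natCast] at hsum
  refine ⟨hsum.summable.norm, ?_⟩
  have hζ := riemannZeta_ne_zero_of_one_lt_re hre
  rw [hsum.tsum_eq, hs, ← natCast_pow_mul_sum_divisors_div_pow hn0]
  field_simp
end

section
/- Let k ≥ 1 be a fixed integer. There exists a positive constant ϱ depending only on k such that for all ξ > 0 and all real y: Σ_{n≥1} n^{k-1}·e^{-nξ}·(1 - cos(ny)) ≥ ϱ·( e^{-ξ}/(1-e^{-ξ})^k − e^{-ξ}/|1-e^{-ξ-iy}|^k ). -/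
/-!
For `‖w‖ < 1` the negative binomial series gives
`∑ₙ C(n+m, m) w^(n+1) = w / (1 - w)^(m+1)`. Applying it to `q = e^(-ξ)` and to
`w = e^(-ξ-iy)`, and taking real parts, `q / (1-q)^k - Re (w / (1-w)^k)` is the series
`∑ₙ C(n+k-1, k-1) e^(-(n+1)ξ) (1 - cos((n+1)y))`. Since `Re ≤ ‖·‖` and
`C(n+k-1, k-1) ≤ (n+1)^(k-1)`, the theorem holds with `ϱ = 1`.
-/

theorem hasSum_choose_mul_pow_succ {𝕜 : Type*} [NormedField 𝕜] (m : ℕ) {r : 𝕜}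
    (hr : ‖r‖ < 1) :
    HasSum (fun n ↦ ((n + m).choose m : 𝕜) * r ^ (n + 1)) (r / (1 - r) ^ (m + 1)) := by
  have h := (hasSum_choose_mul_geometric_of_norm_lt_one m hr).mul_right r
  rw [one_div_mul_eq_div] at h
  exact h.congr_fun fun n ↦ by ring

theorem Complex.exp_neg_add_mul_I_pow_re (ξ y : ℝ) (n : ℕ) :
    (exp (-(ξ + y * I)) ^ n).re = Real.exp (-n * ξ) * Real.cos (n * y) := by
  rw [← exp_nat_mul, exp_re]
  simp [Real.cos_neg, neg_mul, mul_neg]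

theorem hasSum_choose_mul_exp_mul_one_sub_cos (m : ℕ) {ξ : ℝ} (hξ : 0 < ξ) (y : ℝ) :
    HasSum (fun n : ℕ ↦ ((n + m).choose m : ℝ) * Real.exp (-((n + 1 : ℕ) : ℝ) * ξ) *
        (1 - Real.cos (((n + 1 : ℕ) : ℝ) * y)))
      (Real.exp (-ξ) / (1 - Real.exp (-ξ)) ^ (m + 1) -
        (Complex.exp (-(ξ + y * Complex.I)) /
          (1 - Complex.exp (-(ξ + y * Complex.I))) ^ (m + 1)).re) := by
  have hq : ‖Real.exp (-ξ)‖ < 1 := by simpa using hξ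
  have hw : ‖Complex.exp (-(ξ + y * Complex.I))‖ < 1 := by simpa [Complex.norm_exp] using hξ
  refine ((hasSum_choose_mul_pow_succ m hq).sub
    (Complex.hasSum_re (hasSum_choose_mul_pow_succ m hw))).congr_fun fun n ↦ ?_
  rw [← Complex.ofReal_natCast, Complex.re_ofReal_mul, Complex.exp_neg_add_mul_I_pow_re,
    ← Real.exp_nat_mul, mul_neg, ← neg_mul]
  ring

theorem summable_pow_mul_exp_mul_one_sub_cos (m : ℕ) {ξ : ℝ} (hξ : 0 < ξ) (y : ℝ) :
    Summable (fun n : ℕ ↦ ((n + 1 : ℕ) : ℝ) ^ m * Real.exp (-((n + 1 : ℕ) : ℝ) * ξ) *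
        (1 - Real.cos (((n + 1 : ℕ) : ℝ) * y))) := by
  have hq : ‖Real.exp (-ξ)‖ < 1 := by simpa using hξ
  have hgeom : Summable (fun n : ℕ ↦ ((n + 1 : ℕ) : ℝ) ^ m * Real.exp (-ξ) ^ (n + 1)) :=
    (summable_nat_add_iff (f := fun n : ℕ ↦ (n : ℝ) ^ m * Real.exp (-ξ) ^ n) 1).2
      (summable_pow_mul_geometric_of_norm_lt_one m hq)
  refine Summable.of_nonneg_of_le (fun n ↦ ?_) (fun n ↦ ?_) (hgeom.mul_right 2)
  · exact mul_nonneg (by positivity) (sub_nonneg.2 (Real.cos_le_one _))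
  · rw [← Real.exp_nat_mul, neg_mul, mul_neg]
    gcongr
    linarith [Real.neg_one_le_cos (((n + 1 : ℕ) : ℝ) * y)]

theorem stmt14 (k : ℕ) (hk : 1 ≤ k) :
    ∃ ϱ : ℝ, 0 < ϱ ∧ ∀ ξ : ℝ, 0 < ξ → ∀ y : ℝ,
      ϱ * (Real.exp (-ξ) / (1 - Real.exp (-ξ)) ^ k -
            Real.exp (-ξ) / ‖1 - Complex.exp (-(ξ + y * Complex.I))‖ ^ k) ≤
        ∑' n : ℕ, ((n + 1 : ℕ) : ℝ) ^ (k - 1) * Real.exp (-((n + 1 : ℕ) : ℝ) * ξ) *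
          (1 - Real.cos (((n + 1 : ℕ) : ℝ) * y)) := by
  obtain ⟨m, rfl⟩ : ∃ m, k = m + 1 := ⟨k - 1, by omega⟩
  refine ⟨1, one_pos, fun ξ hξ y ↦ ?_⟩
  set w := Complex.exp (-(ξ + y * Complex.I))
  have hS := hasSum_choose_mul_exp_mul_one_sub_cos m hξ y
  rw [one_mul, Nat.add_sub_cancel]
  calc _ ≤ Real.exp (-ξ) / (1 - Real.exp (-ξ)) ^ (m + 1) - (w / (1 - w) ^ (m + 1)).re := by
        gcongr
        simpa [w, Complex.norm_exp] using Complex.re_le_norm (w / (1 - w) ^ (m + 1))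
    _ = _ := hS.tsum_eq.symm
    _ ≤ _ := by
      refine hS.summable.tsum_le_tsum (fun n ↦ ?_) (summable_pow_mul_exp_mul_one_sub_cos m hξ y)
      gcongr
      · exact sub_nonneg.2 (Real.cos_le_one _)
      · exact_mod_cast Nat.choose_add_le_add_one_pow n m
end
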